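/- Fix a finite set V partitioned into disjoint odd-size sets V_1, ..., V_n and a graph G on V in which each V_i is independent and each induced bipartite subgraph on V_i ∪ V_j is Eulerian. Call a sequence (x_1,...,x_n,y_1,...,y_n) special if x_i ∈ V_i, y_i ∈ {x_1,...,x_n}, and for each i either y_i = x_i or {x_i, y_i} is an edge of G. Then the number of special sequences is odd. -/

import Mathlib

/-!
Write `M = I + A` for `A` the adjacency matrix of `G` over `ZMod 2`. For a transversal `x`
(which is injective) the number of admissible `y` is `∏ i, ∑ j, M (x i) (x j)`, so expanding the
product, the number of special sequences is congruent to `∑ g ∑ x ∏ i, M (x i) (x (g i))`, the sum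
running over all maps `g : ι → ι`. If some `k` is not in the range of `g`, then `x k` occurs in the
single factor `M (x k) (x (g k))`, and summing it over `x k ∈ V_k` counts the neighbours of
`x (g k)` in `V_k`, an even number. For a permutation `σ`, the symmetry of `M` makes the terms of
`σ` and `σ⁻¹` equal, so they cancel unless `σ` is an involution; a nontrivial involution swaps some
`k` and `m`, which produces the factor `M (x k) (x m) ^ 2`, and in characteristic two its sum over
`x k` is the square of an even count. Only `σ = 1` is left, contributing `∏ i, |V_i|`, which is odd.
-/

open Finset Fintype Function

section Transversal

variable {ι V R : Type*} [Fintype ι] [DecidableEq ι]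

theorem sum_piFinset_eq_sum_sum_update [AddCommMonoid R] (P : ι → Finset V) {k : ι} {w : V}
    (hw : w ∈ P k) (F : (ι → V) → R) :
    ∑ x ∈ piFinset P, F x = ∑ y ∈ piFinset (update P k {w}), ∑ v ∈ P k, F (update y k v) := by
  rw [← sum_product_right' (f := fun v y ↦ F (update y k v))]
  refine sum_nbij' (fun x ↦ (x k, update x k w)) (fun q ↦ update q.2 k q.1) ?_ ?_ ?_ ?_ ?_
  · intro x hx
    simp only [mem_product, Fintype.mem_piFinset] at hx ⊢
    refine ⟨hx k, fun i ↦ ?_⟩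
    rcases eq_or_ne i k with rfl | hik <;> simp_all
  · rintro ⟨v, y⟩ hq
    simp only [mem_product, Fintype.mem_piFinset] at hq ⊢
    intro i
    rcases eq_or_ne i k with rfl | hik
    · simpa using hq.1
    · simpa [hik] using hq.2 i
  · intro x _
    simp
  · rintro ⟨v, y⟩ hq
    simp only [mem_product, Fintype.mem_piFinset] at hq
    have : y k = w := by simpa using hq.2 k
    simp [← this]
  · intro x _
    simp

theorem sum_piFinset_mul_eq_zero [CommSemiring R] (P : ι → Finset V) {k m : ι} (hkm : k ≠ m)
    (F : (ι → V) → R) (hF : ∀ x v, F (update x k v) = F x)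
    (A : V → V → R) (hA : ∀ w ∈ P m, ∑ v ∈ P k, A v w = 0) :
    ∑ x ∈ piFinset P, F x * A (x k) (x m) = 0 := by
  obtain hk | ⟨w, hw⟩ := (P k).eq_empty_or_nonempty
  · rw [piFinset_eq_empty.mpr ⟨k, hk⟩, Finset.sum_empty]
  rw [sum_piFinset_eq_sum_sum_update P hw]
  refine sum_eq_zero fun y hy ↦ ?_
  have hym : y m ∈ P m := by simpa [hkm.symm] using Fintype.mem_piFinset.mp hy m
  simp only [hF, update_self, update_of_ne hkm.symm, ← mul_sum, hA _ hym, mul_zero]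

theorem ncard_setOf_mem_piFinset_prod (P : ι → Finset V) (T : (ι → V) → ι → Finset V) :
    {p : (ι → V) × (ι → V) | (∀ i, p.1 i ∈ P i) ∧ ∀ i, p.2 i ∈ T p.1 i}.ncard =
      ∑ x ∈ piFinset P, ∏ i, #(T x i) := by
  have : {p : (ι → V) × (ι → V) | (∀ i, p.1 i ∈ P i) ∧ ∀ i, p.2 i ∈ T p.1 i} =
      ((piFinset P).sigma fun x ↦ piFinset (T x)).map (Equiv.sigmaEquivProd _ _).toEmbedding := by
    ext ⟨x, y⟩
    simp
  rw [this, Set.ncard_coe_finset, card_map, card_sigma]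
  simp only [card_piFinset]

theorem injective_of_mem_piFinset {P : ι → Finset V} (hP : Pairwise (Disjoint on P)) {x : ι → V}
    (hx : x ∈ piFinset P) : Injective x := fun i j hij ↦ by
  by_contra hne
  exact disjoint_left.mp (hP hne) (Fintype.mem_piFinset.mp hx i)
    (hij ▸ Fintype.mem_piFinset.mp hx j)

variable [CommSemiring R] (M : Matrix V V R) (P : ι → Finset V)

def transversalWeight (g : ι → ι) : R :=
  ∑ x ∈ piFinset P, ∏ i, M (x i) (x (g i))

variable {M P}

theorem transversalWeight_eq_zero_of_not_surjective
    (hcol : ∀ k m, k ≠ m → ∀ w ∈ P m, ∑ v ∈ P k, M v w = 0) {g : ι → ι} (hg : ¬ Surjective g) :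
    transversalWeight M P g = 0 := by
  obtain ⟨k, hk⟩ : ∃ k, ∀ i, g i ≠ k := by simpa [Surjective] using hg
  have hgk : g k ≠ k := hk k
  unfold transversalWeight
  simp_rw [← prod_erase_mul _ _ (mem_univ k)]
  refine sum_piFinset_mul_eq_zero P hgk.symm _ (fun x v ↦ ?_) M (hcol k (g k) hgk.symm)
  refine Finset.prod_congr rfl fun i hi ↦ ?_
  rw [update_of_ne (ne_of_mem_erase hi), update_of_ne (hk i)]

theorem transversalWeight_eq_zero_of_inv_eq_self [CharP R 2]
    (hM : M.IsSymm) (hcol : ∀ k m, k ≠ m → ∀ w ∈ P m, ∑ v ∈ P k, M v w = 0)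
    {σ : Equiv.Perm ι} (hinv : σ⁻¹ = σ) (hσ : σ ≠ 1) :
    transversalWeight M P σ = 0 := by
  obtain ⟨k, hk⟩ : ∃ k, σ k ≠ k := by
    by_contra! h
    exact hσ (Equiv.ext h)
  set m := σ k
  have hσm : σ m = k := by rw [← hinv]; exact σ.symm_apply_apply k
  have hm : m ∈ univ.erase k := mem_erase.mpr ⟨hk, mem_univ _⟩
  have hsplit : ∀ x : ι → V, ∏ i, M (x i) (x (σ i)) =
      (∏ i ∈ (univ.erase k).erase m, M (x i) (x (σ i))) * M (x k) (x m) ^ 2 := by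
    intro x
    rw [← prod_erase_mul _ _ (mem_univ k), ← prod_erase_mul _ _ hm, hσm, hM.apply]
    ring
  unfold transversalWeight
  simp_rw [hsplit]
  refine sum_piFinset_mul_eq_zero P hk.symm _ (fun x v ↦ ?_) (fun v w ↦ M v w ^ 2) fun w hw ↦ ?_
  · refine Finset.prod_congr rfl fun i hi ↦ ?_
    have him : i ≠ m := ne_of_mem_erase hi
    have hσi : σ i ≠ k := fun h ↦ him (σ.injective (h.trans hσm.symm))
    rw [update_of_ne (ne_of_mem_erase (mem_of_mem_erase hi)), update_of_ne hσi]
  · rw [← sum_pow_char, hcol k m hk.symm w hw, zero_pow two_ne_zero]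

theorem transversalWeight_inv (hM : M.IsSymm) (σ : Equiv.Perm ι) :
    transversalWeight M P ⇑(σ⁻¹ : Equiv.Perm ι) = transversalWeight M P σ :=
  sum_congr rfl fun x _ ↦ by
    rw [← Equiv.prod_comp σ]
    simp [hM.apply]

theorem transversalWeight_id (hdiag : ∀ v, M v v = 1) :
    transversalWeight M P id = ∏ i, (#(P i) : R) := by
  simp [transversalWeight, hdiag, card_piFinset]

theorem sum_transversalWeight [CharP R 2] (hM : M.IsSymm) (hdiag : ∀ v, M v v = 1)
    (hcol : ∀ k m, k ≠ m → ∀ w ∈ P m, ∑ v ∈ P k, M v w = 0) :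
    ∑ g, transversalWeight M P g = ∏ i, (#(P i) : R) := by
  have hperm : ∑ σ : Equiv.Perm ι, transversalWeight M P σ = ∑ g, transversalWeight M P g :=
    Fintype.sum_of_injective _ DFunLike.coe_injective _ _
      (fun g hg ↦ transversalWeight_eq_zero_of_not_surjective hcol fun hs ↦
        hg ⟨Equiv.ofBijective g (Finite.surjective_iff_bijective.mp hs), rfl⟩)
      fun _ ↦ rfl
  have hcancel : ∑ σ ∈ (univ : Finset (Equiv.Perm ι)).erase 1, transversalWeight M P σ = 0 :=
    sum_involution (fun σ _ ↦ σ⁻¹)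
      (fun σ _ ↦ by rw [transversalWeight_inv hM, CharTwo.add_self_eq_zero])
      (fun σ hσ hne hinv ↦ hne (transversalWeight_eq_zero_of_inv_eq_self hM hcol hinv
        (ne_of_mem_erase hσ)))
      (fun σ hσ ↦ by simpa using hσ) fun σ _ ↦ inv_inv σ
  rw [← hperm, ← add_sum_erase _ _ (mem_univ 1), hcancel, add_zero, Equiv.Perm.coe_one,
    transversalWeight_id hdiag]

end Transversal

section Graph

variable {ι V R : Type*}

namespace SimpleGraph

def specialSequences (G : SimpleGraph V) (P : ι → Finset V) : Set ((ι → V) × (ι → V)) :=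
  {p | (∀ i, p.1 i ∈ P i) ∧ (∀ i, p.2 i ∈ Set.range p.1) ∧
    (∀ i, p.2 i = p.1 i ∨ G.Adj (p.1 i) (p.2 i))}

variable [DecidableEq V] (G : SimpleGraph V) [DecidableRel G.Adj]

theorem one_add_adjMatrix_apply [AddMonoidWithOne R] (u v : V) :
    (1 + G.adjMatrix R) u v = if u = v ∨ G.Adj u v then 1 else 0 := by
  by_cases huv : u = v
  · simp [huv]
  · simp [huv, Matrix.one_apply_ne huv]

theorem sum_one_add_adjMatrix_apply_eq_zero [Semiring R] [CharP R 2] {P : ι → Finset V}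
    (hP : Pairwise (Disjoint on P))
    (heven : ∀ i j, i ≠ j → ∀ v ∈ P i, Even {w | w ∈ P j ∧ G.Adj v w}.ncard)
    {k m : ι} (hkm : k ≠ m) {w : V} (hw : w ∈ P m) :
    ∑ v ∈ P k, (1 + G.adjMatrix R) v w = 0 := by
  have hwk : w ∉ P k := disjoint_right.mp (hP hkm) hw
  have hcard := heven m k hkm.symm w hw
  rw [← coe_filter, Set.ncard_coe_finset] at hcard
  calc ∑ v ∈ P k, (1 + G.adjMatrix R) v w = #{v ∈ P k | G.Adj w v} := by
        rw [natCast_card_filter]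
        exact sum_congr rfl fun v hv ↦ by simp [ne_of_mem_of_not_mem hv hwk, G.adj_comm]
    _ = 0 := (CharP.cast_eq_zero_iff R 2 _).mpr (even_iff_two_dvd.mp hcard)

variable [Fintype ι] [DecidableEq ι]

theorem ncard_specialSequences (P : ι → Finset V) :
    (G.specialSequences P).ncard =
      ∑ x ∈ piFinset P, ∏ i, #(image x {j | x j = x i ∨ G.Adj (x i) (x j)}) := by
  rw [← ncard_setOf_mem_piFinset_prod]
  congr
  ext ⟨x, y⟩
  simp only [specialSequences, Set.mem_range, mem_image, mem_filter, mem_univ, true_and]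
  refine and_congr_right fun _ ↦ forall_and.symm.trans (forall_congr' fun i ↦ ?_)
  constructor
  · rintro ⟨⟨j, hj⟩, hadj⟩
    exact ⟨j, hj ▸ hadj, hj⟩
  · rintro ⟨j, hadj, hj⟩
    exact hj ▸ ⟨⟨j, rfl⟩, hadj⟩

theorem natCast_ncard_specialSequences [CommSemiring R] {P : ι → Finset V}
    (hP : Pairwise (Disjoint on P)) :
    ((G.specialSequences P).ncard : R) =
      ∑ x ∈ piFinset P, ∏ i, ∑ j, (1 + G.adjMatrix R) (x i) (x j) := by
  rw [ncard_specialSequences, Nat.cast_sum]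
  refine sum_congr rfl fun x hx ↦ ?_
  rw [Nat.cast_prod]
  refine prod_congr rfl fun i _ ↦ ?_
  rw [card_image_of_injective _ (injective_of_mem_piFinset hP hx), natCast_card_filter]
  simp only [one_add_adjMatrix_apply, eq_comm]

end SimpleGraph

end Graph

theorem stmt_1_general {V : Type*} [Fintype V] [DecidableEq V] (n : ℕ)
    (G : SimpleGraph V) (P : Fin n → Finset V)
    (hdisj : ∀ i j, i ≠ j → Disjoint (P i) (P j))
    (hodd : ∀ i, Odd (P i).card)
    (heuler : ∀ i j, i ≠ j → ∀ v ∈ P i, Even {w | w ∈ P j ∧ G.Adj v w}.ncard) :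
    Odd {p : (Fin n → V) × (Fin n → V) |
        (∀ i, p.1 i ∈ P i) ∧
        (∀ i, p.2 i ∈ Set.range p.1) ∧
        (∀ i, p.2 i = p.1 i ∨ G.Adj (p.1 i) (p.2 i))}.ncard := by
  classical
  change Odd (G.specialSequences P).ncard
  set M := 1 + G.adjMatrix (ZMod 2)
  rw [← ZMod.natCast_eq_one_iff_odd, G.natCast_ncard_specialSequences hdisj]
  calc ∑ x ∈ piFinset P, ∏ i, ∑ j, M (x i) (x j)
      = ∑ x ∈ piFinset P, ∑ g : Fin n → Fin n, ∏ i, M (x i) (x (g i)) := by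
        simp_rw [Fintype.prod_sum]
    _ = ∑ g, transversalWeight M P g := sum_comm
    _ = ∏ i, (#(P i) : ZMod 2) :=
        sum_transversalWeight (Matrix.isSymm_one.add G.isSymm_adjMatrix) (by simp [M])
          fun _ _ hkm _ hw ↦ G.sum_one_add_adjMatrix_apply_eq_zero hdisj heuler hkm hw
    _ = 1 := prod_eq_one fun i _ ↦ ZMod.natCast_eq_one_iff_odd.mpr (hodd i)

/-- the number of special sequences is odd. -/
theorem stmt_1 {V : Type*} [Fintype V] [DecidableEq V] (n : ℕ)
    (G : SimpleGraph V) (P : Fin n → Finset V)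
    (hdisj : ∀ i j, i ≠ j → Disjoint (P i) (P j))
    (hcover : ∀ v : V, ∃ i, v ∈ P i)
    (hodd : ∀ i, Odd (P i).card)
    (hindep : ∀ i, ∀ x ∈ P i, ∀ y ∈ P i, ¬ G.Adj x y)
    (heuler : ∀ i j, i ≠ j → ∀ v ∈ P i, Even {w | w ∈ P j ∧ G.Adj v w}.ncard) :
    Odd {p : (Fin n → V) × (Fin n → V) |
        (∀ i, p.1 i ∈ P i) ∧
        (∀ i, p.2 i ∈ Set.range p.1) ∧
        (∀ i, p.2 i = p.1 i ∨ G.Adj (p.1 i) (p.2 i))}.ncard :=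
  stmt_1_general n G P hdisj hodd heuler
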